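/- Let V be a finite-dimensional real vector space with inner product h and A : V → V invertible and h-skew-symmetric. Then there exists a symmetric positive definite operator S commuting with A such that (AS)² = -Id. Moreover S can be chosen as a polynomial in A². -/

import Mathlib

/-!
Since `A` is skew-adjoint and injective, `B = -A²` is symmetric and positive definite:
`⟪B x, x⟫ = ‖A x‖²`. Take `S = B^(-1/2)`; on the finite spectrum of `B` the function `t ↦ t^(-1/2)`
agrees with a Lagrange interpolation polynomial, so `S` is a polynomial in `B`, hence in `A²`.
It therefore commutes with `A`, and `(A S)² = A² S² = -B B⁻¹ = -1`.
-/

open Polynomial RealInnerProductSpace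

theorem Module.End.exists_aeval_apply_eq_smul_of_hasEigenvector {K M ι : Type*} [Field K]
    [AddCommGroup M] [Module K M] [Fintype ι] {f : Module.End K M} {μ : ι → K} {v : ι → M}
    (hv : ∀ i, f.HasEigenvector (μ i) (v i)) (g : K → K) :
    ∃ p : K[X], ∀ i, aeval f p (v i) = g (μ i) • v i := by
  classical
  refine ⟨Lagrange.interpolate (Finset.univ.image μ) id g, fun i => ?_⟩
  rw [Module.End.aeval_apply_of_hasEigenvector (hv i)]
  congr 1
  exact Lagrange.eval_interpolate_at_node g Function.injective_id.injOn
    (Finset.mem_image_of_mem μ (Finset.mem_univ i))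

theorem LinearMap.IsSymmetric.aeval {E : Type*} [NormedAddCommGroup E]
    [InnerProductSpace ℝ E] {B : E →ₗ[ℝ] E} (hB : B.IsSymmetric) (p : ℝ[X]) :
    (aeval B p).IsSymmetric := by
  induction p using Polynomial.induction_on' with
  | add p q hp hq => rw [map_add]; exact hp.add hq
  | monomial n c =>
    rw [aeval_monomial, ← Algebra.smul_def]
    exact (hB.pow n).smul (conj_trivial c)

theorem Polynomial.commute_aeval_of_commute {R A : Type*} [CommSemiring R] [Semiring A]
    [Algebra R A] {a b : A} (h : Commute a b) (p : R[X]) : Commute a (aeval b p) :=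
  Algebra.commute_of_mem_adjoin_singleton_of_commute (aeval_mem_adjoin_singleton R b) h

section InnerProductSpace

variable {E : Type*} [NormedAddCommGroup E] [InnerProductSpace ℝ E] [FiniteDimensional ℝ E]

theorem LinearMap.IsSymmetric.exists_inv_sqrt {B : E →ₗ[ℝ] E} (hB : B.IsSymmetric)
    (hBpos : ∀ x, x ≠ 0 → 0 < ⟪B x, x⟫) :
    ∃ S : E →ₗ[ℝ] E, S.IsSymmetric ∧ (∀ x, x ≠ 0 → 0 < ⟪S x, x⟫) ∧ B * (S * S) = 1 ∧
      ∃ p : ℝ[X], S = Polynomial.aeval B p := by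
  set b := hB.eigenvectorBasis rfl
  set μ := hB.eigenvalues rfl
  have hv : ∀ i, Module.End.HasEigenvector B (μ i) (b i) :=
    hB.hasEigenvector_eigenvectorBasis rfl
  have hμ : ∀ i, B (b i) = μ i • b i := fun i => (hv i).apply_eq_smul
  have hμpos : ∀ i, 0 < μ i := fun i => by
    simpa [hμ, real_inner_smul_left, real_inner_self_eq_norm_sq, b.orthonormal.1 i]
      using hBpos (b i) (b.orthonormal.ne_zero i)
  -- `S = T²` with `T = B^(-1/4)` makes positivity of `S` immediate.
  obtain ⟨q, hq⟩ := Module.End.exists_aeval_apply_eq_smul_of_hasEigenvector hv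
    (fun t => t ^ (-(1 / 4 : ℝ)))
  set T := Polynomial.aeval B q
  have hBT : B * (T * T * (T * T)) = 1 := by
    refine b.toBasis.ext fun i => ?_
    have hc : μ i ^ (-(1 / 4 : ℝ)) * μ i ^ (-(1 / 4 : ℝ)) *
        (μ i ^ (-(1 / 4 : ℝ)) * μ i ^ (-(1 / 4 : ℝ))) * μ i = 1 := by
      simp only [← Real.rpow_add (hμpos i)]
      norm_num [Real.rpow_neg_one, (hμpos i).ne']
    simp only [OrthonormalBasis.coe_toBasis, Module.End.mul_apply, hq, map_smul, hμ, smul_smul,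
      hc, one_smul, Module.End.one_apply]
  have hT : T.IsSymmetric := hB.aeval q
  refine ⟨T * T, hT.mul_of_commute hT rfl, fun x hx => ?_, hBT, q ^ 2, by rw [map_pow, sq]⟩
  have hTx : T x ≠ 0 := fun h0 => hx <| by
    simpa [Module.End.mul_apply, h0] using (LinearMap.congr_fun hBT x).symm
  rw [Module.End.mul_apply, hT]
  exact real_inner_self_pos.mpr hTx

theorem exists_isSymmetric_mul_sq_eq_neg_one_of_skew {A : E →ₗ[ℝ] E}
    (hA : Function.Injective A) (hskew : ∀ x y, ⟪A x, y⟫ = -⟪x, A y⟫) :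
    ∃ S : E →ₗ[ℝ] E, S.IsSymmetric ∧ (∀ x, x ≠ 0 → 0 < ⟪S x, x⟫) ∧ A * S = S * A ∧
      A * S * (A * S) = -1 ∧ ∃ P : ℝ[X], S = aeval (A * A) P := by
  have hB : (-(A * A)).IsSymmetric := fun x y => by
    simp only [LinearMap.neg_apply, Module.End.mul_apply, inner_neg_left, inner_neg_right,
      hskew, neg_neg]
  have hBpos : ∀ x, x ≠ 0 → 0 < ⟪(-(A * A)) x, x⟫ := fun x hx => by
    rw [LinearMap.neg_apply, Module.End.mul_apply, inner_neg_left, hskew, neg_neg]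
    exact real_inner_self_pos.mpr ((map_ne_zero_iff A hA).mpr hx)
  obtain ⟨S, hSsym, hSpos, hBS, p, rfl⟩ := hB.exists_inv_sqrt hBpos
  have hAS : Commute A (aeval (-(A * A)) p) :=
    commute_aeval_of_commute ((Commute.refl A).mul_right (Commute.refl A)).neg_right p
  refine ⟨_, hSsym, hSpos, hAS, ?_, p.comp (-X), by simp [aeval_comp]⟩
  rw [hAS.symm.mul_mul_mul_comm, ← neg_eq_iff_eq_neg, ← neg_mul, hBS]

end InnerProductSpace

abbrev innerProductCoreOfPosDef {V : Type*} [AddCommGroup V] [Module ℝ V]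
    (h : V →ₗ[ℝ] V →ₗ[ℝ] ℝ) (hsym : ∀ x y, h x y = h y x) (hpos : ∀ x, x ≠ 0 → 0 < h x x) :
    InnerProductSpace.Core ℝ V where
  inner x y := h x y
  conj_inner_symm x y := hsym y x
  re_inner_nonneg x := by
    rcases eq_or_ne x 0 with rfl | hx
    · simp
    · exact (hpos x hx).le
  definite x hx := by
    by_contra hx0
    exact (hpos x hx0).ne' hx
  add_left x y z := by simp
  smul_left x y r := by simp

/-- If `A` is an invertible `h`-skew-symmetric operator on a finite-dimensional
real inner product space `(V, h)`, then there exists a symmetric positive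
definite operator `S` commuting with `A` such that `(A S)² = -Id`; moreover `S`
can be chosen to be a polynomial in `A²`. -/
theorem quaternionicDouble.stmt2
    {V : Type*} [AddCommGroup V] [Module ℝ V] [FiniteDimensional ℝ V]
    (h : V →ₗ[ℝ] V →ₗ[ℝ] ℝ)
    (hsym : ∀ x y, h x y = h y x)
    (hpos : ∀ x, x ≠ 0 → 0 < h x x)
    (A : Module.End ℝ V)
    (hbij : Function.Bijective A)
    (hskew : ∀ x y, h (A x) y = - h x (A y)) :
    ∃ S : Module.End ℝ V,
      (∀ x y, h (S x) y = h x (S y)) ∧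
      (∀ x, x ≠ 0 → 0 < h (S x) x) ∧
      A * S = S * A ∧
      (A * S) * (A * S) = -1 ∧
      ∃ P : Polynomial ℝ, S = Polynomial.aeval (A * A) P := by
  let _ : NormedAddCommGroup V := (innerProductCoreOfPosDef h hsym hpos).toNormedAddCommGroup
  let _ : InnerProductSpace ℝ V := .ofCore (innerProductCoreOfPosDef h hsym hpos).toCore
  exact exists_isSymmetric_mul_sq_eq_neg_one_of_skew hbij.injective hskew
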